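/- arXiv:1510.07357 — 4 statements merged into one kernel-verified Lean document; each statement's English description precedes it below -/
import Mathlib

section
/- For all positive integers x ≤ N, there exists an (N,x)-strongly-selective family of length O(x² log N); i.e., there is a family S of subsets of {1,…,N} of size at most c·x²·⌈log N⌉ (for an absolute constant c) such that for every nonempty Z ⊆ {1,…,N} with |Z| ≤ x and every z ∈ Z, some member S_i of the family satisfies S_i ∩ Z = {z}. -/
/-!
Choose `s` functions `h_i : [N] → Fin (2x)` independently and uniformly, and let `S_i = h_i⁻¹(0)`.
A fixed `z ∈ Z` with `|Z| ≤ x` is isolated by one `S_i` with probability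
`(1/2x)(1 - 1/2x)^(|Z|-1) ≥ 1/4x` (Bernoulli), so all `s` sets miss it with probability at most
`(1 - 1/4x)^s ≤ 2^(-s/4x)`. There are fewer than `2^((x+1)L)` pairs `(Z, z)`, where `N < 2^L`,
so for `s = 8x²L` the union bound leaves a family that isolates every pair.
-/

open Finset

lemma pow_le_two_mul_sub_one_pow {q m : ℕ} (h : 2 * m ≤ q) : q ^ m ≤ 2 * (q - 1) ^ m := by
  rcases Nat.eq_zero_or_pos m with rfl | hm
  · simp
  have hq : 1 ≤ q := by omega
  have bernoulli := pow_add_mul_le_add_pow (a := (q : ℤ)) (b := -1) (by positivity) (by omega) m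
  rw [← sub_eq_add_neg] at bernoulli
  have hsplit : (q : ℤ) ^ m = q * q ^ (m - 1) := by rw [← pow_succ', Nat.sub_add_cancel hm]
  have hm_le : (2 * m : ℤ) * q ^ (m - 1) ≤ q * q ^ (m - 1) := by
    gcongr
    exact_mod_cast h
  zify [hq]
  linarith

lemma two_mul_sub_one_pow_self_le {r : ℕ} (hr : 0 < r) : 2 * (r - 1) ^ r ≤ r ^ r := by
  have bernoulli := pow_add_mul_le_add_pow (a := r - 1) (b := 1) (Nat.zero_le _) (by omega) r
  rw [Nat.sub_add_cancel hr, Nat.cast_id, mul_one] at bernoulli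
  have hsplit : (r - 1) ^ r = (r - 1) * (r - 1) ^ (r - 1) := by
    rw [← pow_succ', Nat.sub_add_cancel hr]
  have : (r - 1) * (r - 1) ^ (r - 1) ≤ r * (r - 1) ^ (r - 1) := by gcongr; omega
  omega

lemma mul_sub_one_pow_lt_pow {x L M : ℕ} (hx : 0 < x) (hM : M < 2 ^ ((x + 1) * L)) :
    M * (4 * x - 1) ^ (8 * x ^ 2 * L) < (4 * x) ^ (8 * x ^ 2 * L) := by
  have key := Nat.pow_le_pow_left (two_mul_sub_one_pow_self_le (r := 4 * x) (by omega)) (2 * x * L)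
  rw [mul_pow, ← pow_mul, ← pow_mul, show 4 * x * (2 * x * L) = 8 * x ^ 2 * L by ring] at key
  refine lt_of_lt_of_le ?_ key
  gcongr
  · exact pow_pos (by omega) _
  · exact hM.trans_le (Nat.pow_le_pow_right two_pos (by nlinarith))

lemma card_filter_powerset_card_le_le {α : Type*} (s : Finset α) (x : ℕ) :
    #{Z ∈ s.powerset | #Z ≤ x} ≤ (#s + 1) ^ x := by
  classical
  have hsub : {Z ∈ s.powerset | #Z ≤ x} ⊆ (range (x + 1)).biUnion (powersetCard · s) := by
    intro Z hZ
    rw [mem_filter, mem_powerset] at hZ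
    exact mem_biUnion.2 ⟨#Z, mem_range.2 (by omega), mem_powersetCard.2 ⟨hZ.1, rfl⟩⟩
  calc #{Z ∈ s.powerset | #Z ≤ x}
      ≤ ∑ k ∈ range (x + 1), #(powersetCard k s) := (card_le_card hsub).trans card_biUnion_le
    _ ≤ ∑ k ∈ range (x + 1), #s ^ k * 1 ^ (x - k) * x.choose k := by
        gcongr with k hk
        rw [card_powersetCard, one_pow, mul_one]
        exact (Nat.choose_le_pow _ _).trans
          (Nat.le_mul_of_pos_right _ (Nat.choose_pos (by simpa [Nat.lt_succ_iff] using hk)))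
    _ = (#s + 1) ^ x := (add_pow _ _ _).symm

theorem exists_tuple_forall_exists_mem {Ω ι : Type*} [Fintype Ω] [Nonempty Ω] [DecidableEq Ω]
    (J : Finset ι) (G : ι → Finset Ω) {r s : ℕ}
    (hG : ∀ j ∈ J, Fintype.card Ω ≤ r * #(G j)) (hJ : #J * (r - 1) ^ s < r ^ s) :
    ∃ ω : Fin s → Ω, ∀ j ∈ J, ∃ i, ω i ∈ G j := by
  set c := Fintype.card Ω
  have hbad : ∀ j ∈ J, r ^ s * #(G j)ᶜ ^ s ≤ (r - 1) ^ s * c ^ s := by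
    intro j hj
    rw [← mul_pow, ← mul_pow, card_compl, Nat.mul_sub, Nat.sub_one_mul]
    gcongr
    exact hG j hj
  set bad := J.biUnion fun j => Fintype.piFinset fun _ : Fin s => (G j)ᶜ
  have hcount : #bad < c ^ s := by
    refine card_biUnion_le.trans_lt (lt_of_mul_lt_mul_left ?_ (Nat.zero_le (r ^ s)))
    calc r ^ s * ∑ j ∈ J, #(Fintype.piFinset fun _ : Fin s => (G j)ᶜ)
        = ∑ j ∈ J, r ^ s * #(G j)ᶜ ^ s := by simp [mul_sum]
      _ ≤ ∑ j ∈ J, (r - 1) ^ s * c ^ s := sum_le_sum hbad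
      _ = #J * (r - 1) ^ s * c ^ s := by rw [sum_const, smul_eq_mul, mul_assoc]
      _ < r ^ s * c ^ s := by gcongr
  obtain ⟨ω, -, hω⟩ := exists_mem_notMem_of_card_lt_card (t := univ)
    (by rwa [card_univ, Fintype.card_fun, Fintype.card_fin] : #bad < _)
  refine ⟨ω, fun j hj => ?_⟩
  simpa [Fintype.mem_piFinset] using fun h => hω (mem_biUnion.2 ⟨j, hj, h⟩)

section

variable {V β : Type*} [Fintype V] [DecidableEq V] [Fintype β] [DecidableEq β]

lemma card_filter_card_le_and_mem_lt {x L : ℕ} (hL : Fintype.card V < 2 ^ L) :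
    #{p : Finset V × V | #p.1 ≤ x ∧ p.2 ∈ p.1} < 2 ^ ((x + 1) * L) := by
  have hsets : #{Z ∈ (univ : Finset V).powerset | #Z ≤ x} ≤ (2 ^ L) ^ x :=
    (card_filter_powerset_card_le_le univ x).trans (Nat.pow_le_pow_left (by simpa using hL) x)
  calc #{p : Finset V × V | #p.1 ≤ x ∧ p.2 ∈ p.1}
      ≤ #({Z ∈ (univ : Finset V).powerset | #Z ≤ x} ×ˢ univ) :=
        card_le_card fun p hp => by simp only [mem_filter, mem_univ, true_and] at hp; simp [hp.1]
    _ < (2 ^ L) ^ x * 2 ^ L := by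
        rw [card_product, card_univ]
        exact Nat.mul_lt_mul_of_le_of_lt hsets hL (by positivity)
    _ = 2 ^ ((x + 1) * L) := by ring

lemma card_filter_fiber_inter_eq_singleton (b : β) {Z : Finset V} {z : V} (hz : z ∈ Z) :
    #{h : V → β | ({v | h v = b} : Finset V) ∩ Z = {z}} =
      (Fintype.card β - 1) ^ (#Z - 1) * Fintype.card β ^ (Fintype.card V - #Z) := by
  have hpi : ({h : V → β | ({v | h v = b} : Finset V) ∩ Z = {z}} : Finset (V → β)) =
      Fintype.piFinset fun v => if v ∈ Z then (if v = z then {b} else {b}ᶜ) else univ := by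
    ext h
    simp only [mem_filter, mem_univ, true_and, Fintype.mem_piFinset, Finset.ext_iff, mem_inter,
      mem_singleton]
    refine forall_congr' fun v => ?_
    by_cases hv : v ∈ Z <;> by_cases hvz : v = z <;> simp_all
  rw [hpi, Fintype.card_piFinset]
  simp only [apply_ite card, card_singleton, card_compl, card_univ]
  rw [prod_ite, filter_mem_eq_inter, univ_inter, prod_const, ← mul_prod_erase Z _ hz, if_pos rfl,
    one_mul, prod_congr rfl fun v hv => if_neg (ne_of_mem_erase hv), prod_const,
    card_erase_of_mem hz, ← compl_filter, filter_mem_eq_inter, univ_inter, card_compl]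

lemma card_fun_le_mul_card_filter_fiber_inter_eq_singleton (b : β) {Z : Finset V} {z : V}
    (hz : z ∈ Z) (hZ : 2 * (#Z - 1) ≤ Fintype.card β) :
    Fintype.card (V → β) ≤
      2 * Fintype.card β * #{h : V → β | ({v | h v = b} : Finset V) ∩ Z = {z}} := by
  rw [card_filter_fiber_inter_eq_singleton b hz, Fintype.card_fun]
  have hk : 1 ≤ #Z := card_pos.2 ⟨z, hz⟩
  have hkn : #Z ≤ Fintype.card V := card_le_univ Z
  set q := Fintype.card β
  calc q ^ Fintype.card V = q * q ^ (#Z - 1) * q ^ (Fintype.card V - #Z) := by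
        rw [← pow_succ', ← pow_add]; congr 1; omega
    _ ≤ q * (2 * (q - 1) ^ (#Z - 1)) * q ^ (Fintype.card V - #Z) := by
        gcongr; exact pow_le_two_mul_sub_one_pow hZ
    _ = _ := by ring

end

def IsStronglySelective {α ι : Type*} [DecidableEq α] (U : Finset α) (x : ℕ)
    (S : ι → Finset α) : Prop :=
  (∀ i, S i ⊆ U) ∧ ∀ Z ⊆ U, #Z ≤ x → ∀ z ∈ Z, ∃ i, S i ∩ Z = {z}

theorem IsStronglySelective.map_subtype {α ι : Type*} [DecidableEq α] {U : Finset α} {x : ℕ}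
    {S : ι → Finset U} (hS : IsStronglySelective univ x S) :
    IsStronglySelective U x fun i => (S i).map (Function.Embedding.subtype (· ∈ U)) := by
  refine ⟨fun i => ?_, fun Z hZ hZx z hz => ?_⟩
  · intro a ha
    obtain ⟨a, -, rfl⟩ := mem_map.1 ha
    exact a.2
  · obtain ⟨i, hi⟩ := hS.2 (Z.subtype (· ∈ U)) (subset_univ _)
      (by rwa [card_subtype, filter_true_of_mem hZ]) ⟨z, hZ hz⟩ (mem_subtype.2 hz)
    refine ⟨i, ?_⟩
    rw [← subtype_map_of_mem hZ, ← map_inter, hi, map_singleton]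
    rfl

theorem exists_isStronglySelective_univ {V : Type*} [Fintype V] [DecidableEq V] {x L : ℕ}
    (hx : 0 < x) (hL : Fintype.card V < 2 ^ L) :
    ∃ S : Fin (8 * x ^ 2 * L) → Finset V, IsStronglySelective univ x S := by
  let b : Fin (2 * x) := ⟨0, by omega⟩
  have : Nonempty (V → Fin (2 * x)) := ⟨fun _ => b⟩
  have hdense : ∀ p ∈ ({p : Finset V × V | #p.1 ≤ x ∧ p.2 ∈ p.1} : Finset _),
      Fintype.card (V → Fin (2 * x)) ≤
        4 * x * #{h : V → Fin (2 * x) | ({v | h v = b} : Finset V) ∩ p.1 = {p.2}} := by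
    intro p hp
    simp only [mem_filter, mem_univ, true_and] at hp
    have := card_fun_le_mul_card_filter_fiber_inter_eq_singleton b hp.2
      (by rw [Fintype.card_fin]; omega)
    rwa [Fintype.card_fin, ← mul_assoc] at this
  obtain ⟨ω, hω⟩ := exists_tuple_forall_exists_mem _ _ hdense
    (mul_sub_one_pow_lt_pow hx (card_filter_card_le_and_mem_lt hL))
  refine ⟨fun i => {v | ω i v = b}, fun i => subset_univ _, fun Z _ hZ z hz => ?_⟩
  obtain ⟨i, hi⟩ := hω (Z, z) (by simp [hZ, hz])
  exact ⟨i, (mem_filter.1 hi).2⟩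

/-- Existence of (N,x)-strongly-selective families of length O(x^2 log N):
there is an absolute constant `c` such that for all positive `x ≤ N` there is a
family of subsets of `{1,…,N}` of size at most `c * x^2 * ⌈log N⌉` such that
every nonempty `Z ⊆ {1,…,N}` with `|Z| ≤ x` and every `z ∈ Z` is selected. -/
theorem ssf_existence :
    ∃ c : ℕ, 0 < c ∧ ∀ N x : ℕ, 0 < x → x ≤ N →
      ∃ S : List (Finset ℕ),
        (∀ A ∈ S, A ⊆ Finset.Icc 1 N) ∧
        S.length ≤ c * x ^ 2 * (Nat.clog 2 N + 1) ∧
        ∀ Z ⊆ Finset.Icc 1 N, Z.Nonempty → Z.card ≤ x → ∀ z ∈ Z,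
          ∃ A ∈ S, A ∩ Z = {z} := by
  refine ⟨8, by norm_num, fun N x hx _ => ?_⟩
  have hN : Fintype.card (Icc 1 N) < 2 ^ (Nat.clog 2 N + 1) := by
    have := Nat.le_pow_clog one_lt_two N
    rw [Fintype.card_coe, Nat.card_Icc, pow_succ]
    omega
  obtain ⟨S, hS⟩ := exists_isStronglySelective_univ hx hN
  obtain ⟨hSN, hSsel⟩ := hS.map_subtype
  refine ⟨List.ofFn fun i => (S i).map (Function.Embedding.subtype (· ∈ Icc 1 N)), ?_, ?_, ?_⟩
  · simpa [List.mem_ofFn] using hSN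
  · simp
  · intro Z hZ _ hZx z hz
    obtain ⟨i, hi⟩ := hSsel Z hZ hZx z hz
    exact ⟨_, List.mem_ofFn.2 ⟨i, rfl⟩, hi⟩
end

section
/- Suppose Δ nodes each transmit independently with probability p = 1/2^k in a round, where 2^{k−1} ≤ Δ ≤ 2^k − 1. Then the probability that exactly one node transmits in that round is at least 1/8. -/
/-!
With `p = 1/2^k` and `m = 2^(k-1)` we have `Δ p ≥ 1/2` and `Δ - 1 ≤ 2m`, while Bernoulli's
inequality gives `(1 - p)^m ≥ 1 - m p = 1/2`, so `(1 - p)^(Δ - 1) ≥ (1 - p)^(2m) ≥ 1/4`.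
-/

theorem one_div_four_le_one_sub_pow_two_mul {p : ℝ} {m : ℕ} (hp₁ : p ≤ 1)
    (hm : 2 * m * p ≤ 1) : (1 : ℝ) / 4 ≤ (1 - p) ^ (2 * m) := by
  have bernoulli : 1 - m * p ≤ (1 - p) ^ m := by
    simpa [sub_eq_add_neg] using one_add_mul_le_pow (a := -p) (by linarith) m
  have half_le : (1 : ℝ) / 2 ≤ 1 - m * p := by linarith
  calc (1 : ℝ) / 4 = (1 / 2) ^ 2 := by norm_num
    _ ≤ ((1 - p) ^ m) ^ 2 := pow_le_pow_left₀ (by norm_num) (half_le.trans bernoulli) 2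
    _ = (1 - p) ^ (2 * m) := by rw [← pow_mul, mul_comm]

/-- If `Δ` nodes each transmit independently with probability `1/2^k` where
`2^(k-1) ≤ Δ ≤ 2^k - 1`, then the probability that exactly one node transmits,
namely `Δ · (1/2^k) · (1 - 1/2^k)^(Δ-1)`, is at least `1/8`. -/
theorem exactly_one_transmits (k Δ : ℕ) (hk : 1 ≤ k)
    (h1 : 2 ^ (k - 1) ≤ Δ) (h2 : Δ ≤ 2 ^ k - 1) :
    (1 : ℝ) / 8 ≤ (Δ : ℝ) * (1 / 2 ^ k) * (1 - 1 / 2 ^ k) ^ (Δ - 1) := by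
  set p : ℝ := 1 / 2 ^ k with hp
  have hp₀ : 0 ≤ p := by positivity
  have hp₁ : p ≤ 1 := div_le_one_of_le₀ (one_le_pow₀ one_le_two) (by positivity)
  have two_pow : 2 ^ k = 2 * 2 ^ (k - 1) := by
    rw [← pow_succ', Nat.sub_add_cancel hk]
  have hm : 2 * (2 ^ (k - 1) : ℕ) * p = 1 := by
    rw [hp, ← Nat.cast_ofNat, ← Nat.cast_pow, ← Nat.cast_mul, ← two_pow]
    field_simp
  have half_le : (1 : ℝ) / 2 ≤ Δ * p := by
    have : ((2 ^ (k - 1) : ℕ) : ℝ) ≤ Δ := by exact_mod_cast h1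
    nlinarith
  have exponent_le : Δ - 1 ≤ 2 * 2 ^ (k - 1) := by omega
  have quarter_le : (1 : ℝ) / 4 ≤ (1 - p) ^ (Δ - 1) :=
    (one_div_four_le_one_sub_pow_two_mul hp₁ hm.le).trans
      (pow_le_pow_of_le_one (by linarith) (by linarith) exponent_le)
  calc (1 : ℝ) / 8 = 1 / 2 * (1 / 4) := by norm_num
    _ ≤ Δ * p * (1 - p) ^ (Δ - 1) :=
      mul_le_mul half_le quarter_le (by norm_num) (by positivity)
end

section
/- Let S be a set of points in the plane such that any two distinct points of S are at distance greater than r. Then for any point p, the number of points of S at distance at most 2r from p is at most 49. -/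
/-!
Cut the plane into half-open squares of side `r / √2` anchored at `p`. Two points in the same
square are at distance less than `r`, so each square holds at most one point of `S`. Since
`2r < 3 · r / √2`, the disk of radius `2r` around `p` only meets the `6 × 6` block of squares
whose indices lie in `[-3, 2]²`, so it contains at most `36 ≤ 49` points of `S`.
-/

open Finset

variable {ι : Type*}

noncomputable def gridCell (s : ℝ) (p x : EuclideanSpace ℝ ι) (i : ι) : ℤ := ⌊(x i - p i) / s⌋

theorem dist_apply_lt_of_gridCell_eq {s : ℝ} (hs : 0 < s) {p x y : EuclideanSpace ℝ ι}
    (h : gridCell s p x = gridCell s p y) (i : ι) : dist (x i) (y i) < s := by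
  have := Int.abs_sub_lt_one_of_floor_eq_floor (congrFun h i)
  rwa [div_sub_div_same, sub_sub_sub_cancel_right, abs_div, abs_of_pos hs, div_lt_one hs,
    ← Real.dist_eq] at this

theorem dist_lt_of_gridCell_eq [Fintype ι] [Nonempty ι] {s : ℝ} (hs : 0 < s)
    {p x y : EuclideanSpace ℝ ι} (h : gridCell s p x = gridCell s p y) :
    dist x y < √(Fintype.card ι) * s := by
  have hcoord (i : ι) : dist (x i) (y i) ^ 2 < s ^ 2 :=
    pow_lt_pow_left₀ (dist_apply_lt_of_gridCell_eq hs h i) dist_nonneg two_ne_zero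
  calc dist x y = √(∑ i, dist (x i) (y i) ^ 2) := EuclideanSpace.dist_eq x y
    _ < √(∑ _i : ι, s ^ 2) :=
      Real.sqrt_lt_sqrt (by positivity) (sum_lt_sum_of_nonempty univ_nonempty fun i _ => hcoord i)
    _ = √(Fintype.card ι) * s := by
      rw [sum_const, card_univ, nsmul_eq_mul, Real.sqrt_mul (Nat.cast_nonneg _), Real.sqrt_sq hs.le]

theorem gridCell_mem_piFinset [Fintype ι] [DecidableEq ι] {s : ℝ} (hs : 0 < s) {m : ℕ}
    {p x : EuclideanSpace ℝ ι} (h : dist x p < m * s) :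
    gridCell s p x ∈ Fintype.piFinset fun _ => Icc (-m : ℤ) (m - 1) := by
  refine Fintype.mem_piFinset.2 fun i => ?_
  have hi : |(x i - p i) / s| < m := by
    rw [abs_div, abs_of_pos hs, div_lt_iff₀ hs, ← Real.dist_eq]
    exact (PiLp.dist_apply_le x p i).trans_lt h
  rw [abs_lt] at hi
  rw [mem_Icc, gridCell, Int.le_floor, Int.le_sub_one_iff, Int.floor_lt]
  push_cast
  exact ⟨hi.1.le, hi.2⟩

theorem card_filter_dist_le_le_of_separated [Fintype ι] [DecidableEq ι] [Nonempty ι]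
    {r s R : ℝ} {m : ℕ} (hs : 0 < s) (hsr : √(Fintype.card ι) * s ≤ r) (hR : R < m * s)
    (S : Finset (EuclideanSpace ℝ ι))
    (hS : ∀ u ∈ S, ∀ v ∈ S, u ≠ v → r < dist u v) (p : EuclideanSpace ℝ ι) :
    #(S.filter fun q => dist p q ≤ R) ≤ (2 * m) ^ Fintype.card ι := by
  have hmaps : ∀ q ∈ S.filter fun q => dist p q ≤ R,
      gridCell s p q ∈ Fintype.piFinset fun _ => Icc (-m : ℤ) (m - 1) := fun q hq =>
    gridCell_mem_piFinset hs <| by rw [dist_comm]; linarith [(mem_filter.1 hq).2]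
  have hinj : Set.InjOn (gridCell s p) (S.filter fun q => dist p q ≤ R) := by
    intro u hu v hv huv
    by_contra hne
    have := hS u (mem_filter.1 hu).1 v (mem_filter.1 hv).1 hne
    linarith [dist_lt_of_gridCell_eq hs huv]
  calc #(S.filter fun q => dist p q ≤ R)
      ≤ #(Fintype.piFinset fun _ : ι => Icc (-m : ℤ) (m - 1)) :=
        card_le_card_of_injOn _ hmaps hinj
    _ = (2 * m) ^ Fintype.card ι := by
      simp only [Fintype.card_piFinset, Int.card_Icc, sub_add_cancel, sub_neg_eq_add, prod_const,
        card_univ]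
      congr 1
      omega

/-- If `S` is a set of points in the plane any two of which are at distance
greater than `r`, then at most `25` points of `S` lie within distance `2r` of any
point `p`. -/
theorem independent_points_in_disk_le_49 (r : ℝ) (hr : 0 < r)
    (S : Finset (EuclideanSpace ℝ (Fin 2)))
    (hS : ∀ u ∈ S, ∀ v ∈ S, u ≠ v → r < dist u v)
    (p : EuclideanSpace ℝ (Fin 2)) :
    (S.filter (fun q => dist p q ≤ 2 * r)).card ≤ 49 := by
  have hsqrt2 : (0 : ℝ) < √2 := by positivity
  have hcard : Fintype.card (Fin 2) = 2 := Fintype.card_fin 2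
  have hR : 2 * r < (3 : ℕ) * (r / √2) := by
    rw [Nat.cast_ofNat, mul_div_assoc', lt_div_iff₀ hsqrt2]
    nlinarith [Real.sq_sqrt (show (0 : ℝ) ≤ 2 by norm_num), Real.sqrt_nonneg 2]
  calc #(S.filter fun q => dist p q ≤ 2 * r)
      ≤ (2 * 3) ^ Fintype.card (Fin 2) :=
        card_filter_dist_le_le_of_separated (div_pos hr hsqrt2)
          (by rw [hcard, Nat.cast_ofNat, mul_div_cancel₀ _ hsqrt2.ne']) hR S hS p
    _ ≤ 49 := by norm_num
end

section
/- Let G be a unit disk graph on a finite set V ⊆ ℝ² with connection radius ρ (vertices adjacent iff their distance is at most ρ), and let M ⊆ V be a maximal independent set of G. If one adds, for each pair of vertices of M at graph distance at most 3 in G, all internal vertices of one shortest path between them, then the resulting set H (M together with the added connectors) is a connected dominating set of G, provided G is connected. -/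
/-!
If `u, v ∈ M` are at distance at least `2`, the vertex two steps along a shortest `u`–`v` path is
dominated by some `m ∈ M`, which is within distance `3` of `u` and strictly closer to `v`.
Induction on the distance therefore links any two `M`-vertices by a chain of `M`-vertices with
consecutive distances at most `3`, and each link is a connector path inside `H`. Every connector
lies on such a path, so it is joined inside `H` to an `M`-vertex as well.
-/

namespace SimpleGraph

variable {V : Type*} {G : SimpleGraph V} {M H : Set V}

lemma exists_mem_dist_le_one_of_dominating (hdom : ∀ v, v ∈ M ∨ ∃ u ∈ M, G.Adj u v) (x : V) :
    ∃ m ∈ M, G.dist m x ≤ 1 := by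
  rcases hdom x with hx | ⟨m, hm, hmx⟩
  · exact ⟨x, hx, by simp⟩
  · exact ⟨m, hm, (dist_eq_one_iff_adj.mpr hmx).le⟩

lemma Connected.exists_mem_dist_le_three_dist_lt_of_dominating (hconn : G.Connected)
    (hdom : ∀ v, v ∈ M ∨ ∃ u ∈ M, G.Adj u v) {u v : V} (huv : 2 ≤ G.dist u v) :
    ∃ m ∈ M, G.dist u m ≤ 3 ∧ G.dist m v < G.dist u v := by
  obtain ⟨p, hp⟩ := hconn.exists_walk_length_eq_dist u v
  have hux : G.dist u (p.getVert 2) ≤ 2 := by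
    exact (dist_le (p.take 2)).trans (by simp [Walk.take_length])
  have hxv : G.dist (p.getVert 2) v ≤ G.dist u v - 2 := by
    simpa [Walk.drop_length, hp] using dist_le (p.drop 2)
  obtain ⟨m, hm, hmx⟩ := exists_mem_dist_le_one_of_dominating hdom (p.getVert 2)
  have hum := hconn.dist_triangle (u := u) (v := p.getVert 2) (w := m)
  have hmv := hconn.dist_triangle (u := m) (v := p.getVert 2) (w := v)
  rw [dist_comm (u := p.getVert 2)] at hum
  exact ⟨m, hm, by omega, by omega⟩

lemma Connected.induce_reachable_of_dominating (hconn : G.Connected)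
    (hdom : ∀ v, v ∈ M ∨ ∃ u ∈ M, G.Adj u v) (hMH : M ⊆ H)
    (hnear : ∀ u (hu : u ∈ M) v (hv : v ∈ M), G.dist u v ≤ 3 →
      (G.induce H).Reachable ⟨u, hMH hu⟩ ⟨v, hMH hv⟩)
    {u v : V} (hu : u ∈ M) (hv : v ∈ M) :
    (G.induce H).Reachable ⟨u, hMH hu⟩ ⟨v, hMH hv⟩ := by
  induction hd : G.dist u v using Nat.strong_induction_on generalizing u with
  | _ n ih =>
    by_cases h3 : n ≤ 3
    · exact hnear u hu v hv (hd ▸ h3)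
    obtain ⟨m, hm, hum, hmv⟩ :=
      hconn.exists_mem_dist_le_three_dist_lt_of_dominating hdom (u := u) (v := v) (by omega)
    exact (hnear u hu m hm hum).trans (ih _ (hd ▸ hmv) hm rfl)

end SimpleGraph

open SimpleGraph in
theorem mis_plus_connectors_is_cds_general
    {V : Type*} (G : SimpleGraph V)
    (hconn : G.Connected)
    (M : Set V)
    (hmax : ∀ v : V, v ∈ M ∨ ∃ u ∈ M, G.Adj u v)
    (H : Set V) (hMH : M ⊆ H)
    (hpaths : ∀ u ∈ M, ∀ v ∈ M, G.dist u v ≤ 3 →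
      ∃ p : G.Walk u v, p.length = G.dist u v ∧ ∀ w ∈ p.support, w ∈ H)
    (hHonly : ∀ h ∈ H, h ∈ M ∨ ∃ u ∈ M, ∃ v ∈ M, ∃ p : G.Walk u v,
      p.length = G.dist u v ∧ G.dist u v ≤ 3 ∧ (∀ w ∈ p.support, w ∈ H) ∧
      h ∈ p.support) :
    (G.induce H).Connected ∧ ∀ v : V, v ∈ H ∨ ∃ u ∈ H, G.Adj u v := by
  classical
  have hM : ∀ {u v} (hu : u ∈ M) (hv : v ∈ M),
      (G.induce H).Reachable ⟨u, hMH hu⟩ ⟨v, hMH hv⟩ :=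
    hconn.induce_reachable_of_dominating hmax hMH fun u hu v hv huv ↦
      let ⟨p, _, hp⟩ := hpaths u hu v hv huv
      (p.induce H hp).reachable
  have hH : ∀ h (hh : h ∈ H), ∃ u, ∃ hu : u ∈ M,
      (G.induce H).Reachable ⟨u, hMH hu⟩ ⟨h, hh⟩ := by
    intro h hh
    rcases hHonly h hh with hhM | ⟨u, hu, v, -, p, -, -, hp, hmem⟩
    · exact ⟨h, hhM, .refl _⟩
    · exact ⟨u, hu, ((p.takeUntil h hmem).induce H fun w hw ↦
        hp w (p.support_takeUntil_subset_support hmem hw)).reachable⟩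
  obtain ⟨m, hm, -⟩ := exists_mem_dist_le_one_of_dominating hmax hconn.nonempty.some
  refine ⟨(connected_iff_exists_forall_reachable _).mpr ⟨⟨m, hMH hm⟩, fun ⟨h, hh⟩ ↦ ?_⟩,
    fun v ↦ ?_⟩
  · obtain ⟨u, hu, huh⟩ := hH h hh
    exact (hM hm hu).trans huh
  · rcases hmax v with hv | ⟨u, hu, huv⟩
    · exact .inl (hMH hv)
    · exact .inr ⟨u, hMH hu, huv⟩

/-- Let `G` be a connected unit disk graph on a finite set of points in the
plane (vertices adjacent iff distinct and at distance at most `ρ`), `M` a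
maximal independent set of `G`, and `H ⊇ M` obtained from `M` by adding, for
each pair of `M`-vertices at graph distance at most `3`, the internal vertices
of one shortest path between them. Then `H` is a connected dominating set:
the subgraph induced by `H` is connected and every vertex is in `H` or adjacent
to a vertex of `H`. -/
theorem mis_plus_connectors_is_cds
    {V : Type*} [Fintype V] (pos : V → EuclideanSpace ℝ (Fin 2)) (ρ : ℝ)
    (hρ : 0 < ρ) (G : SimpleGraph V)
    (hudg : ∀ u v : V, G.Adj u v ↔ u ≠ v ∧ dist (pos u) (pos v) ≤ ρ)
    (hconn : G.Connected)
    (M : Set V)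
    (hindep : ∀ u ∈ M, ∀ v ∈ M, ¬G.Adj u v)
    (hmax : ∀ v : V, v ∈ M ∨ ∃ u ∈ M, G.Adj u v)
    (H : Set V) (hMH : M ⊆ H)
    (hpaths : ∀ u ∈ M, ∀ v ∈ M, G.dist u v ≤ 3 →
      ∃ p : G.Walk u v, p.length = G.dist u v ∧ ∀ w ∈ p.support, w ∈ H)
    (hHonly : ∀ h ∈ H, h ∈ M ∨ ∃ u ∈ M, ∃ v ∈ M, ∃ p : G.Walk u v,
      p.length = G.dist u v ∧ G.dist u v ≤ 3 ∧ (∀ w ∈ p.support, w ∈ H) ∧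
      h ∈ p.support) :
    (G.induce H).Connected ∧ ∀ v : V, v ∈ H ∨ ∃ u ∈ H, G.Adj u v :=
  mis_plus_connectors_is_cds_general G hconn M hmax H hMH hpaths hHonly
end
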